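/- Under Assumption: f ℓ-smooth, f(·,y) L-Lipschitz, f(x,·) concave on convex Y with diameter D, and GDA updates with η_y = 1/ℓ, the quantity Δ_{t−1} = Φ(x_{t−1}) − f(x_{t−1}, y_{t−1}) satisfies, for any s ≤ t−1: Δ_{t−1} ≤ η_x L²(2t − 2s − 1) + (ℓ/2)(‖y_{t−1} − y*(x_s)‖² − ‖y_t − y*(x_s)‖²) + (f(x_t, y_t) − f(x_{t−1}, y_{t−1})), where y*(x) ∈ argmax_{y∈Y} f(x,y). -/

import Mathlib

open Set Filter
open scoped RealInnerProductSpace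

/-! The gap splits as `Φ(x_t) - f(x_t, y*(x_s))`, plus `f(x_t, y*(x_s)) - f(x_t, y_{t+1})`,
plus `f(x_t, y_{t+1}) - f(x_{t+1}, y_{t+1})`, plus `f(x_{t+1}, y_{t+1}) - f(x_t, y_t)`.
Since `f(·, y)` is `L`-Lipschitz, every gradient `∇ₓf` has norm at most `L`, so each step moves
`x` by at most `η_x L`; as `y*(x_s)` maximizes `f(x_s, ·)`, the first term is at most
`2L‖x_t - x_s‖ ≤ 2(t - s)η_x L²` and the third at most `η_x L²`. The second term is controlled by
the three-point inequality of one projected gradient ascent step with step size `1/ℓ` on the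
concave, `ℓ`-smooth `f(x_t, ·)`: concavity, the quadratic lower bound from smoothness and the
variational inequality of the projection add up to `(ℓ/2)(‖y_t - z‖² - ‖y_{t+1} - z‖²)`. -/

theorem dist_le_mul_of_dist_succ_le {α : Type*} [PseudoMetricSpace α] {u : ℕ → α} {C : ℝ}
    (hu : ∀ k, dist (u k) (u (k + 1)) ≤ C) {s t : ℕ} (hst : s ≤ t) :
    dist (u s) (u t) ≤ ((t : ℝ) - s) * C := by
  have := dist_le_Ico_sum_of_dist_le (f := u) (d := fun _ => C) hst fun _ _ => hu _
  rwa [Finset.sum_const, Nat.card_Ico, nsmul_eq_mul, Nat.cast_sub hst] at this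

theorem IsMaxOn.sSup_image_eq {α β : Type*} [ConditionallyCompleteLattice β] {f : α → β}
    {s : Set α} {a : α} (ha : a ∈ s) (hmax : IsMaxOn f s a) : sSup (f '' s) = f a :=
  IsGreatest.csSup_eq ⟨mem_image_of_mem f ha, forall_mem_image.2 hmax⟩

section Gradient

variable {E : Type*} [NormedAddCommGroup E] [InnerProductSpace ℝ E] [CompleteSpace E]

theorem HasGradientAt.hasDerivAt_comp_add_smul {h : E → ℝ} {g y v : E} {t : ℝ}
    (hg : HasGradientAt h g (y + t • v)) :
    HasDerivAt (fun s : ℝ => h (y + s • v)) ⟪g, v⟫ t := by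
  have hline : HasDerivAt (fun s : ℝ => y + s • v) v t := by
    simpa using (hasDerivAt_id t).smul_const v |>.const_add y
  have : HasDerivAt (fun s : ℝ => h (y + s • v)) (InnerProductSpace.toDual ℝ E g v) t :=
    hg.hasFDerivAt.comp_hasDerivAt t hline
  simpa using this

theorem HasGradientAt.norm_le_of_lipschitz {h : E → ℝ} {g x : E} {L : ℝ} (hL : 0 ≤ L)
    (hg : HasGradientAt h g x) (hlip : ∀ a, |h a - h x| ≤ L * ‖a - x‖) : ‖g‖ ≤ L := by
  simpa using hg.hasFDerivAt.le_of_lip' hL (Eventually.of_forall hlip)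

theorem ConcaveOn.le_add_inner_of_hasGradientAt {h : E → ℝ} {Y : Set E} {g y z : E}
    (hconc : ConcaveOn ℝ Y h) (hy : y ∈ Y) (hz : z ∈ Y) (hg : HasGradientAt h g y) :
    h z ≤ h y + ⟪g, z - y⟫ := by
  have hline : ConcaveOn ℝ (Icc 0 1) fun t : ℝ => h (y + t • (z - y)) := by
    have := (hconc.comp_affineMap (AffineMap.lineMap y z)).subset
      (fun t ht => hconc.1.lineMap_mem hy hz ht) (convex_Icc 0 1)
    simpa only [Function.comp_def, AffineMap.lineMap_apply_module', add_comm y] using this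
  have hder : HasDerivAt (fun t : ℝ => h (y + t • (z - y))) ⟪g, z - y⟫ 0 :=
    HasGradientAt.hasDerivAt_comp_add_smul (by simpa using hg)
  have := hline.slope_le_of_hasDerivAt (by simp) (by simp) zero_lt_one hder
  simpa [slope_def_field, add_comm (h y)] using this

theorem add_inner_sub_le_of_lipschitz_gradient {h : E → ℝ} {g : E → E} {ℓ : ℝ}
    (hg : ∀ a, HasGradientAt h (g a) a) (hlip : ∀ a b, ‖g a - g b‖ ≤ ℓ * ‖a - b‖) (y v : E) :
    h y + ⟪g y, v⟫ - ℓ / 2 * ‖v‖ ^ 2 ≤ h (y + v) := by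
  set φ : ℝ → ℝ := fun t => h (y + t • v) - t * ⟪g y, v⟫ + ℓ / 2 * ‖v‖ ^ 2 * t ^ 2
  have hder : ∀ t : ℝ, HasDerivAt φ (⟪g (y + t • v) - g y, v⟫ + ℓ * ‖v‖ ^ 2 * t) t := by
    intro t
    have := (((hg (y + t • v)).hasDerivAt_comp_add_smul (y := y)).sub
      ((hasDerivAt_id t).mul_const ⟪g y, v⟫)).add ((hasDerivAt_pow 2 t).const_mul (ℓ / 2 * ‖v‖ ^ 2))
    refine this.congr_deriv ?_
    rw [inner_sub_left]
    ring
  have hder_nonneg : ∀ t : ℝ, 0 ≤ t → 0 ≤ ⟪g (y + t • v) - g y, v⟫ + ℓ * ‖v‖ ^ 2 * t := by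
    intro t ht
    have hg_step : ‖g (y + t • v) - g y‖ ≤ ℓ * (t * ‖v‖) := by
      simpa [norm_smul, abs_of_nonneg ht] using hlip (y + t • v) y
    have := neg_le_of_abs_le (abs_real_inner_le_norm (g (y + t • v) - g y) v)
    nlinarith [norm_nonneg v]
  have hmono : MonotoneOn φ (Icc 0 1) := by
    refine monotoneOn_of_hasDerivWithinAt_nonneg (convex_Icc 0 1)
      (fun t _ => (hder t).continuousAt.continuousWithinAt)
      (fun t _ => (hder t).hasDerivWithinAt) fun t ht => hder_nonneg t ?_
    rw [interior_Icc] at ht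
    exact ht.1.le
  have := hmono (left_mem_Icc.2 zero_le_one) (right_mem_Icc.2 zero_le_one) zero_le_one
  norm_num [φ] at this
  linarith

theorem ConcaveOn.le_three_point {h : E → ℝ} {g : E → E} {Y : Set E} {ℓ : ℝ} (hℓ : 0 < ℓ)
    (hconc : ConcaveOn ℝ Y h) (hg : ∀ a, HasGradientAt h (g a) a)
    (hlip : ∀ a b, ‖g a - g b‖ ≤ ℓ * ‖a - b‖) {y y' z : E} (hy : y ∈ Y) (hz : z ∈ Y)
    (hproj : ⟪y + (1 / ℓ) • g y - y', z - y'⟫ ≤ 0) :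
    h z ≤ h y' + ℓ / 2 * (‖y - z‖ ^ 2 - ‖y' - z‖ ^ 2) := by
  have hconcave := hconc.le_add_inner_of_hasGradientAt hy hz (hg y)
  have hascent := add_inner_sub_le_of_lipschitz_gradient hg hlip y (y' - y)
  rw [add_sub_cancel] at hascent
  have hproj' : ⟪g y, z - y'⟫ ≤ ℓ * ⟪y' - y, z - y'⟫ := by
    have hscale : ℓ • (y + (1 / ℓ) • g y - y') = g y - ℓ • (y' - y) := by
      rw [smul_sub, smul_add, smul_smul, mul_one_div_cancel hℓ.ne', one_smul, smul_sub]; abel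
    have := mul_nonpos_of_nonneg_of_nonpos hℓ.le hproj
    rwa [← real_inner_smul_left, hscale, inner_sub_left, real_inner_smul_left, sub_nonpos] at this
  have hsq : ‖y - z‖ ^ 2 - ‖y' - z‖ ^ 2 = ‖y' - y‖ ^ 2 + 2 * ⟪y' - y, z - y'⟫ := by
    simp only [← real_inner_self_eq_norm_sq, inner_sub_left, inner_sub_right, real_inner_comm]
    ring
  have hsplit : ⟪g y, z - y⟫ = ⟪g y, y' - y⟫ + ⟪g y, z - y'⟫ := by
    rw [← inner_add_right, sub_add_sub_cancel']
  rw [hsq]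
  linarith

end Gradient

theorem IsMaxOn.sub_le_two_mul_of_lipschitz {X β : Type*} [SeminormedAddCommGroup X]
    {F : X → β → ℝ} {S : Set β} {L : ℝ} (hLip : ∀ y ∈ S, ∀ a b, |F a y - F b y| ≤ L * ‖a - b‖)
    {a b : X} {ya yb : β} (hya : ya ∈ S) (hyb : yb ∈ S) (hmax : IsMaxOn (F b) S yb) :
    F a ya - F a yb ≤ 2 * L * ‖a - b‖ := by
  have h₁ := (abs_le.1 (hLip ya hya a b)).2
  have h₂ := (abs_le.1 (hLip yb hyb b a)).2
  rw [norm_sub_rev] at h₂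
  linarith [isMaxOn_iff.1 hmax ya hya]

theorem statement14_general {m n : ℕ} (f : EuclideanSpace ℝ (Fin m) → EuclideanSpace ℝ (Fin n) → ℝ)
    (ℓ L ηx : ℝ) (hℓ : 0 < ℓ) (hL : 0 < L) (hηx : 0 < ηx)
    (Y : Set (EuclideanSpace ℝ (Fin n)))
    (gx : EuclideanSpace ℝ (Fin m) → EuclideanSpace ℝ (Fin n) → EuclideanSpace ℝ (Fin m))
    (gy : EuclideanSpace ℝ (Fin m) → EuclideanSpace ℝ (Fin n) → EuclideanSpace ℝ (Fin n))
    (hgx : ∀ x y, HasGradientAt (fun x' => f x' y) (gx x y) x)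
    (hgy : ∀ x y, HasGradientAt (fun y' => f x y') (gy x y) y)
    (hsmooth : ∀ x x' y y',
      ‖gx x y - gx x' y'‖ ≤ ℓ * (‖x - x'‖ + ‖y - y'‖) ∧
      ‖gy x y - gy x' y'‖ ≤ ℓ * (‖x - x'‖ + ‖y - y'‖))
    (hconc : ∀ x, ConcaveOn ℝ Y (f x))
    (hLip : ∀ y ∈ Y, ∀ x x', |f x y - f x' y| ≤ L * ‖x - x'‖)
    (Φ : EuclideanSpace ℝ (Fin m) → ℝ) (hΦ : ∀ x, Φ x = sSup (f x '' Y))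
    (ystar : EuclideanSpace ℝ (Fin m) → EuclideanSpace ℝ (Fin n))
    (hystar : ∀ x, ystar x ∈ Y ∧ IsMaxOn (f x) Y (ystar x))
    (P : EuclideanSpace ℝ (Fin n) → EuclideanSpace ℝ (Fin n))
    (hP : ∀ z, P z ∈ Y ∧ ∀ y ∈ Y, ⟪z - P z, y - P z⟫ ≤ 0)
    (x : ℕ → EuclideanSpace ℝ (Fin m)) (y : ℕ → EuclideanSpace ℝ (Fin n))
    (hy0 : y 0 ∈ Y)
    (hxupd : ∀ t, x (t + 1) = x t - ηx • gx (x t) (y t))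
    (hyupd : ∀ t, y (t + 1) = P (y t + (1 / ℓ) • gy (x t) (y t))) :
    ∀ s t : ℕ, s ≤ t →
      Φ (x t) - f (x t) (y t) ≤
        ηx * L ^ 2 * (2 * (t : ℝ) - 2 * (s : ℝ) + 1)
          + ℓ / 2 * (‖y t - ystar (x s)‖ ^ 2 - ‖y (t + 1) - ystar (x s)‖ ^ 2)
          + (f (x (t + 1)) (y (t + 1)) - f (x t) (y t)) := by
  intro s t hst
  have hyY : ∀ k, y k ∈ Y := by
    intro k
    induction k with
    | zero => exact hy0
    | succ k _ => rw [hyupd k]; exact (hP _).1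
  have hxstep : ∀ k, dist (x k) (x (k + 1)) ≤ ηx * L := by
    intro k
    rw [dist_eq_norm, hxupd k, sub_sub_cancel, norm_smul, Real.norm_of_nonneg hηx.le]
    exact mul_le_mul_of_nonneg_left
      ((hgx _ _).norm_le_of_lipschitz hL.le fun a => hLip _ (hyY k) a _) hηx.le
  have hdrift : ‖x t - x s‖ ≤ ((t : ℝ) - s) * (ηx * L) := by
    rw [← dist_eq_norm, dist_comm]
    exact dist_le_mul_of_dist_succ_le hxstep hst
  have hys := hystar (x s)
  have hgap : Φ (x t) - f (x t) (ystar (x s)) ≤ 2 * L * ‖x t - x s‖ := by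
    rw [hΦ, (hystar (x t)).2.sSup_image_eq (hystar (x t)).1]
    exact hys.2.sub_le_two_mul_of_lipschitz hLip (hystar (x t)).1 hys.1
  have hascent : f (x t) (ystar (x s)) ≤ f (x t) (y (t + 1))
      + ℓ / 2 * (‖y t - ystar (x s)‖ ^ 2 - ‖y (t + 1) - ystar (x s)‖ ^ 2) :=
    (hconc (x t)).le_three_point hℓ (hgy (x t))
      (fun a b => by simpa using (hsmooth (x t) (x t) a b).2) (hyY t) hys.1
      (hyupd t ▸ (hP _).2 _ hys.1)
  have hxmove : f (x t) (y (t + 1)) - f (x (t + 1)) (y (t + 1)) ≤ L * (ηx * L) :=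
    (abs_le.1 (hLip _ (hyY (t + 1)) _ _)).2.trans
      (mul_le_mul_of_nonneg_left (by simpa [dist_eq_norm] using hxstep t) hL.le)
  have hdrift' := mul_le_mul_of_nonneg_left hdrift (by positivity : (0 : ℝ) ≤ 2 * L)
  linear_combination hgap + hascent + hxmove + hdrift'

/-- Block-wise bound on the primal gap `Δ_{t−1} = Φ(x_{t−1}) − f(x_{t−1},y_{t−1})`
for GDA in the nonconvex-concave setting (stated with shifted index: for all `s ≤ t`,
`Δ_t ≤ η_x L²(2(t+1) − 2s − 1) + (ℓ/2)(‖y_t − y*(x_s)‖² − ‖y_{t+1} − y*(x_s)‖²)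
  + (f(x_{t+1},y_{t+1}) − f(x_t,y_t))`). -/
theorem statement14 {m n : ℕ} (f : EuclideanSpace ℝ (Fin m) → EuclideanSpace ℝ (Fin n) → ℝ)
    (ℓ L ηx D : ℝ) (hℓ : 0 < ℓ) (hL : 0 < L) (hηx : 0 < ηx) (hD : 0 ≤ D)
    (Y : Set (EuclideanSpace ℝ (Fin n))) (hYconv : Convex ℝ Y) (hYcomp : IsCompact Y)
    (hYne : Y.Nonempty)
    (hYdiam : ∀ y ∈ Y, ∀ y' ∈ Y, ‖y - y'‖ ≤ D)
    (gx : EuclideanSpace ℝ (Fin m) → EuclideanSpace ℝ (Fin n) → EuclideanSpace ℝ (Fin m))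
    (gy : EuclideanSpace ℝ (Fin m) → EuclideanSpace ℝ (Fin n) → EuclideanSpace ℝ (Fin n))
    (hgx : ∀ x y, HasGradientAt (fun x' => f x' y) (gx x y) x)
    (hgy : ∀ x y, HasGradientAt (fun y' => f x y') (gy x y) y)
    (hsmooth : ∀ x x' y y',
      ‖gx x y - gx x' y'‖ ≤ ℓ * (‖x - x'‖ + ‖y - y'‖) ∧
      ‖gy x y - gy x' y'‖ ≤ ℓ * (‖x - x'‖ + ‖y - y'‖))
    (hconc : ∀ x, ConcaveOn ℝ Y (f x))
    (hLip : ∀ y ∈ Y, ∀ x x', |f x y - f x' y| ≤ L * ‖x - x'‖)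
    (Φ : EuclideanSpace ℝ (Fin m) → ℝ) (hΦ : ∀ x, Φ x = sSup (f x '' Y))
    (ystar : EuclideanSpace ℝ (Fin m) → EuclideanSpace ℝ (Fin n))
    (hystar : ∀ x, ystar x ∈ Y ∧ IsMaxOn (f x) Y (ystar x))
    (P : EuclideanSpace ℝ (Fin n) → EuclideanSpace ℝ (Fin n))
    (hP : ∀ z, P z ∈ Y ∧ ∀ y ∈ Y, ⟪z - P z, y - P z⟫ ≤ 0)
    (x : ℕ → EuclideanSpace ℝ (Fin m)) (y : ℕ → EuclideanSpace ℝ (Fin n))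
    (hy0 : y 0 ∈ Y)
    (hxupd : ∀ t, x (t + 1) = x t - ηx • gx (x t) (y t))
    (hyupd : ∀ t, y (t + 1) = P (y t + (1 / ℓ) • gy (x t) (y t))) :
    ∀ s t : ℕ, s ≤ t →
      Φ (x t) - f (x t) (y t) ≤
        ηx * L ^ 2 * (2 * (t : ℝ) - 2 * (s : ℝ) + 1)
          + ℓ / 2 * (‖y t - ystar (x s)‖ ^ 2 - ‖y (t + 1) - ystar (x s)‖ ^ 2)
          + (f (x (t + 1)) (y (t + 1)) - f (x t) (y t)) :=
  statement14_general f ℓ L ηx hℓ hL hηx Y gx gy hgx hgy hsmooth hconc hLip Φ hΦ ystar hystar P hP x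
    y hy0 hxupd hyupd
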